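/- In the MICD OL model, for θ ∈ (0,1) the association function a_θ(u,v) = F_θ(u,v) - F_0(u,v) is given by a_θ(u,v) = (θ/2 + min(u,v))·(θ/2 - max(u,v))·1{max(|u|,|v|) < θ/2}, and consequently a_θ is homogeneous of order 2 in θ: a_θ(u,v) = (θ/2)²·(1 + min(ũ,ṽ))·(1 - max(ũ,ṽ))·1{max(|ũ|,|ṽ|) < 1}, where ũ = u/(θ/2), ṽ = v/(θ/2). -/
import Mathlib


open MeasureTheory Set

/-- The support rectangle part of the MICD OL model:
`A = {(x,y) ∈ [-1/2,1/2]² : |x| ≥ θ/2 or |y| ≥ θ/2}`. -/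
def OLsetA (θ : ℝ) : Set (ℝ × ℝ) :=
  {p : ℝ × ℝ | p.1 ∈ Icc (-(1/2):ℝ) (1/2) ∧ p.2 ∈ Icc (-(1/2):ℝ) (1/2)
    ∧ (θ/2 ≤ |p.1| ∨ θ/2 ≤ |p.2|)}

/-- The MICD OL model for `θ ∈ (0,1)`: the mixture
`(1-θ²)·(uniform on A) + θ²·(uniform on B)`, where
`B = {(x,x) : |x| ≤ θ/2}`. -/
noncomputable def OLmeasure (θ : ℝ) : Measure (ℝ × ℝ) :=
  ENNReal.ofReal (1 - θ^2) • ((volume (OLsetA θ))⁻¹ • volume.restrict (OLsetA θ))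
  + ENNReal.ofReal (θ^2) •
      ((ENNReal.ofReal θ)⁻¹ •
        Measure.map (fun u : ℝ => (u, u)) (volume.restrict (Icc (-(θ/2)) (θ/2))))

/-- Joint cdf of the MICD OL model. -/
noncomputable def OLcdf (θ : ℝ) (p : ℝ × ℝ) : ℝ :=
  (OLmeasure θ (Iic p.1 ×ˢ Iic p.2)).toReal

/-- Joint cdf of the independent (θ = 0) model: uniform on `[-1/2,1/2]²`. -/
noncomputable def OLcdf0 (p : ℝ × ℝ) : ℝ :=
  ((volume.restrict (Icc (-(1/2):ℝ) (1/2) ×ˢ Icc (-(1/2):ℝ) (1/2)))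
    (Iic p.1 ×ˢ Iic p.2)).toReal

/- ### Auxiliary lemmas -/

lemma vol_Iic_inter_Icc (u a b : ℝ) :
    volume (Iic u ∩ Icc a b) = ENNReal.ofReal (min u b - a) := by
  have h : Iic u ∩ Icc a b = Icc a (min u b) := by
    ext x
    simp only [mem_inter_iff, mem_Iic, mem_Icc, le_min_iff]
    tauto
  rw [h, Real.volume_Icc]

lemma vol_Iic_inter_Ioo (u a b : ℝ) (hab : a ≤ b) :
    volume (Iic u ∩ Ioo a b) = ENNReal.ofReal (min u b - a) := by
  rcases le_or_gt b u with h | h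
  · have hs : Iic u ∩ Ioo a b = Ioo a b := by
      apply inter_eq_right.mpr
      intro x hx
      exact le_trans hx.2.le h
    rw [hs, Real.volume_Ioo, min_eq_right h]
  · have hs : Iic u ∩ Ioo a b = Ioc a u := by
      ext x
      simp only [mem_inter_iff, mem_Iic, mem_Ioo, mem_Ioc]
      constructor
      · rintro ⟨h1, h2, _⟩; exact ⟨h2, h1⟩
      · rintro ⟨h1, h2⟩; exact ⟨h2, h1, lt_of_le_of_lt h2 h⟩
    rw [hs, Real.volume_Ioc, min_eq_left h.le]

lemma OLsetA_eq (θ : ℝ) :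
    OLsetA θ = (Icc (-(1/2):ℝ) (1/2) ×ˢ Icc (-(1/2):ℝ) (1/2))
      \ (Ioo (-(θ/2)) (θ/2) ×ˢ Ioo (-(θ/2)) (θ/2)) := by
  have habs : ∀ x : ℝ, θ/2 ≤ |x| ↔ ¬ (-(θ/2) < x ∧ x < θ/2) := by
    intro x
    rw [← abs_lt, not_lt]
  ext ⟨x, y⟩
  simp only [OLsetA, mem_setOf_eq, mem_diff, mem_prod, mem_Icc, mem_Ioo, habs,
    not_and_or]
  tauto

lemma key_real (s u v : ℝ) (hs : 0 < s) (huv : u ≤ v) :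
    max (2*s*(min (min u v) s + s)) 0 - max (min u s + s) 0 * max (min v s + s) 0
      = (s + min u v) * (s - max u v) * (if max |u| |v| < s then 1 else 0) := by
  rw [min_eq_left huv, max_eq_right huv]
  rcases lt_or_ge u (-s) with h1 | h1
  · have hmu : min u s = u := min_eq_left (by linarith)
    have hind : ¬ (max |u| |v| < s) := by
      intro h
      have := (abs_lt.mp (lt_of_le_of_lt (le_max_left |u| |v|) h)).1
      linarith
    rw [hmu, if_neg hind, max_eq_right (by nlinarith), max_eq_right (by linarith)]
    ring
  · rcases lt_or_ge v s with h2 | h2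
    · have hu_lt : u < s := lt_of_le_of_lt huv h2
      have hmu : min u s = u := min_eq_left hu_lt.le
      have hmv : min v s = v := min_eq_left h2.le
      have hv : -s ≤ v := le_trans h1 huv
      rw [hmu, hmv, max_eq_left (by nlinarith), max_eq_left (by linarith),
        max_eq_left (by linarith)]
      rcases eq_or_lt_of_le h1 with heq | hlt
      · rw [← heq]; split <;> ring
      · have hind : max |u| |v| < s := by
          rw [max_lt_iff, abs_lt, abs_lt]
          exact ⟨⟨hlt, hu_lt⟩, ⟨lt_of_lt_of_le hlt huv, h2⟩⟩
        rw [if_pos hind]; ring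
    · have hind : ¬ (max |u| |v| < s) := by
        intro h
        have := (abs_lt.mp (lt_of_le_of_lt (le_max_right |u| |v|) h)).2
        linarith
      rw [if_neg hind, min_eq_right h2]
      rcases le_total u s with h3 | h3
      · rw [min_eq_left h3, max_eq_left (by nlinarith), max_eq_left (by linarith),
          max_eq_left (by linarith)]
        ring
      · rw [min_eq_right h3, max_eq_left (by nlinarith), max_eq_left (by linarith)]
        ring

lemma key_real' (s u v : ℝ) (hs : 0 < s) :
    max (2*s*(min (min u v) s + s)) 0 - max (min u s + s) 0 * max (min v s + s) 0
      = (s + min u v) * (s - max u v) * (if max |u| |v| < s then 1 else 0) := by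
  rcases le_total u v with h | h
  · exact key_real s u v hs h
  · have := key_real s v u hs h
    rw [min_comm v u, max_comm v u, max_comm |v| |u|] at this
    linarith [this]

/-- The main computation: the cdf difference in explicit form. -/
lemma OLcdf_sub (θ : ℝ) (hθ : θ ∈ Ioo (0:ℝ) 1) (u v : ℝ) :
    OLcdf θ (u, v) - OLcdf0 (u, v)
      = max (θ * (min (min u v) (θ/2) + θ/2)) 0
        - max (min u (θ/2) + θ/2) 0 * max (min v (θ/2) + θ/2) 0 := by
  obtain ⟨hθ0, hθ1⟩ := hθ
  set s : ℝ := θ/2 with hs_def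
  have hs : 0 < s := by positivity
  have hs2 : s < 1/2 := by rw [hs_def]; linarith
  have hR : MeasurableSet (Iic u ×ˢ Iic v) :=
    measurableSet_Iic.prod measurableSet_Iic
  -- square and inner rectangles intersected with R
  set Rsq : Set (ℝ × ℝ) :=
    (Iic u ∩ Icc (-(1/2):ℝ) (1/2)) ×ˢ (Iic v ∩ Icc (-(1/2):ℝ) (1/2)) with hRsq_def
  set Rin : Set (ℝ × ℝ) :=
    (Iic u ∩ Ioo (-s) s) ×ˢ (Iic v ∩ Ioo (-s) s) with hRin_def
  have hvol_sq : volume Rsq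
      = ENNReal.ofReal (min u (1/2) + 1/2) * ENNReal.ofReal (min v (1/2) + 1/2) := by
    rw [hRsq_def, Measure.volume_eq_prod, Measure.prod_prod, vol_Iic_inter_Icc,
      vol_Iic_inter_Icc, sub_neg_eq_add, sub_neg_eq_add]
  have hvol_in : volume Rin
      = ENNReal.ofReal (min u s + s) * ENNReal.ofReal (min v s + s) := by
    rw [hRin_def, Measure.volume_eq_prod, Measure.prod_prod,
      vol_Iic_inter_Ioo u (-s) s (by linarith), vol_Iic_inter_Ioo v (-s) s (by linarith),
      sub_neg_eq_add, sub_neg_eq_add]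
  have hsub : Rin ⊆ Rsq := by
    apply prod_mono <;>
      exact inter_subset_inter_right _
        ((Ioo_subset_Icc_self).trans (Icc_subset_Icc (by linarith) (by linarith)))
  -- volume of A
  have hvolA : volume (OLsetA θ) = ENNReal.ofReal (1 - θ^2) := by
    rw [OLsetA_eq]
    have hsubA : (Ioo (-(θ/2)) (θ/2) ×ˢ Ioo (-(θ/2)) (θ/2))
        ⊆ (Icc (-(1/2):ℝ) (1/2) ×ˢ Icc (-(1/2):ℝ) (1/2)) := by
      apply prod_mono <;>
        exact (Ioo_subset_Icc_self).trans (Icc_subset_Icc (by linarith) (by linarith))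
    rw [measure_diff hsubA
      ((measurableSet_Ioo.prod measurableSet_Ioo).nullMeasurableSet)
      (by
        rw [Measure.volume_eq_prod, Measure.prod_prod, Real.volume_Ioo]
        exact ENNReal.mul_ne_top ENNReal.ofReal_ne_top ENNReal.ofReal_ne_top)]
    rw [Measure.volume_eq_prod, Measure.prod_prod, Measure.prod_prod,
      Real.volume_Icc, Real.volume_Ioo]
    have h1 : (-(1/2):ℝ) ≤ 1/2 := by norm_num
    have e1 : ((1:ℝ)/2 - -(1/2)) = 1 := by norm_num
    have e2 : (θ/2 - -(θ/2)) = θ := by ring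
    rw [e1, e2, ← ENNReal.ofReal_mul (by norm_num), ← ENNReal.ofReal_mul hθ0.le]
    rw [← ENNReal.ofReal_sub _ (by nlinarith)]
    norm_num [pow_two]
  -- first mixture component evaluated on R
  have hterm1 :
      (ENNReal.ofReal (1 - θ^2) • ((volume (OLsetA θ))⁻¹ • volume.restrict (OLsetA θ)))
        (Iic u ×ˢ Iic v) = volume Rsq - volume Rin := by
    rw [Measure.smul_apply, Measure.smul_apply, smul_eq_mul, smul_eq_mul,
      Measure.restrict_apply hR, hvolA]
    have hA : Iic u ×ˢ Iic v ∩ OLsetA θ = Rsq \ Rin := by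
      rw [OLsetA_eq, hRsq_def, hRin_def, inter_diff_distrib_left,
        prod_inter_prod, prod_inter_prod]
    rw [hA]
    have hne : ENNReal.ofReal (1 - θ^2) ≠ 0 := by
      rw [Ne, ENNReal.ofReal_eq_zero, not_le]
      nlinarith
    rw [← mul_assoc, ENNReal.mul_inv_cancel hne ENNReal.ofReal_ne_top, one_mul]
    rw [measure_diff hsub
      (((measurableSet_Iic.inter measurableSet_Ioo).prod
          (measurableSet_Iic.inter measurableSet_Ioo)).nullMeasurableSet)
      (by rw [hvol_in]; exact ENNReal.mul_ne_top ENNReal.ofReal_ne_top ENNReal.ofReal_ne_top)]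
  -- second mixture component evaluated on R
  have hterm2 :
      (ENNReal.ofReal (θ^2) • ((ENNReal.ofReal θ)⁻¹ •
          Measure.map (fun x : ℝ => (x, x)) (volume.restrict (Icc (-(θ/2)) (θ/2)))))
        (Iic u ×ˢ Iic v)
      = ENNReal.ofReal (θ * (min (min u v) s + s)) := by
    rw [Measure.smul_apply, Measure.smul_apply, smul_eq_mul, smul_eq_mul,
      Measure.map_apply (show Measurable fun x : ℝ => (x, x) from measurable_id.prodMk measurable_id) hR]
    have hpre : (fun x : ℝ => (x, x)) ⁻¹' (Iic u ×ˢ Iic v) = Iic (min u v) := by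
      ext x
      simp only [mem_preimage, mem_prod, mem_Iic, le_min_iff]
    rw [hpre, Measure.restrict_apply measurableSet_Iic]
    have : Icc (-(θ/2)) (θ/2) = Icc (-s) s := by rw [hs_def]
    rw [this, vol_Iic_inter_Icc, sub_neg_eq_add]
    have hθne : ENNReal.ofReal θ ≠ 0 := by
      rw [Ne, ENNReal.ofReal_eq_zero, not_le]; exact hθ0
    rw [pow_two, ENNReal.ofReal_mul hθ0.le]
    calc ENNReal.ofReal θ * ENNReal.ofReal θ *
          ((ENNReal.ofReal θ)⁻¹ * ENNReal.ofReal (min (min u v) s + s))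
        = (ENNReal.ofReal θ * (ENNReal.ofReal θ)⁻¹) *
            (ENNReal.ofReal θ * ENNReal.ofReal (min (min u v) s + s)) := by ring
      _ = ENNReal.ofReal θ * ENNReal.ofReal (min (min u v) s + s) := by
          rw [ENNReal.mul_inv_cancel hθne ENNReal.ofReal_ne_top, one_mul]
      _ = ENNReal.ofReal (θ * (min (min u v) s + s)) := by
          rw [ENNReal.ofReal_mul hθ0.le]
  -- OLcdf0
  have hcdf0 : OLcdf0 (u, v) = max (min u (1/2) + 1/2) 0 * max (min v (1/2) + 1/2) 0 := by
    unfold OLcdf0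
    rw [Measure.restrict_apply hR, prod_inter_prod, ← hRsq_def, hvol_sq,
      ENNReal.toReal_mul, ENNReal.toReal_ofReal', ENNReal.toReal_ofReal']
  -- put it together
  have hfin_sq : volume Rsq ≠ ⊤ := by
    rw [hvol_sq]; exact ENNReal.mul_ne_top ENNReal.ofReal_ne_top ENNReal.ofReal_ne_top
  have hle : volume Rin ≤ volume Rsq := measure_mono hsub
  have hcdf : OLcdf θ (u, v)
      = (max (min u (1/2) + 1/2) 0 * max (min v (1/2) + 1/2) 0
          - max (min u s + s) 0 * max (min v s + s) 0)
        + max (θ * (min (min u v) s + s)) 0 := by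
    unfold OLcdf OLmeasure
    rw [Measure.add_apply, hterm1, hterm2]
    rw [ENNReal.toReal_add
      (by
        exact ne_top_of_le_ne_top hfin_sq (tsub_le_self))
      ENNReal.ofReal_ne_top]
    rw [ENNReal.toReal_sub_of_le hle hfin_sq, hvol_sq, hvol_in,
      ENNReal.toReal_mul, ENNReal.toReal_mul, ENNReal.toReal_ofReal',
      ENNReal.toReal_ofReal', ENNReal.toReal_ofReal', ENNReal.toReal_ofReal',
      ENNReal.toReal_ofReal']
  rw [hcdf, hcdf0]
  ring

/-- In the MICD OL model, for `θ ∈ (0,1)`, the association function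
`a_θ = F_θ - F_0` equals `(θ/2 + min(u,v))·(θ/2 - max(u,v))·1{max(|u|,|v|) < θ/2}`,
and hence is homogeneous of order 2 in `θ`:
`a_θ(u,v) = (θ/2)²·(1 + min(ũ,ṽ))·(1 - max(ũ,ṽ))·1{max(|ũ|,|ṽ|) < 1}` with
`ũ = u/(θ/2)`, `ṽ = v/(θ/2)`. -/
theorem stmt13 (θ : ℝ) (hθ : θ ∈ Ioo (0:ℝ) 1) (u v : ℝ) :
    OLcdf θ (u, v) - OLcdf0 (u, v)
      = (θ/2 + min u v) * (θ/2 - max u v) * (if max |u| |v| < θ/2 then 1 else 0)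
    ∧ OLcdf θ (u, v) - OLcdf0 (u, v)
      = (θ/2)^2 * (1 + min (u/(θ/2)) (v/(θ/2))) * (1 - max (u/(θ/2)) (v/(θ/2)))
          * (if max |u/(θ/2)| |v/(θ/2)| < 1 then 1 else 0) := by
  have hs : (0:ℝ) < θ/2 := by linarith [hθ.1]
  have h1 : OLcdf θ (u, v) - OLcdf0 (u, v)
      = (θ/2 + min u v) * (θ/2 - max u v) * (if max |u| |v| < θ/2 then 1 else 0) := by
    rw [OLcdf_sub θ hθ u v, ← key_real' (θ/2) u v hs]
    ring_nf
  refine ⟨h1, ?_⟩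
  rw [h1]
  have hmin : min (u/(θ/2)) (v/(θ/2)) = min u v / (θ/2) := min_div_div_right hs.le u v
  have hmax : max (u/(θ/2)) (v/(θ/2)) = max u v / (θ/2) := max_div_div_right hs.le u v
  have hind : (if max |u/(θ/2)| |v/(θ/2)| < 1 then (1:ℝ) else 0)
      = (if max |u| |v| < θ/2 then 1 else 0) := by
    congr 1
    rw [abs_div u (θ/2), abs_div v (θ/2), abs_of_pos hs, max_div_div_right (le_of_lt hs),
      div_lt_one hs]
  rw [hmin, hmax, hind]
  have hfac : (θ/2 + min u v) * (θ/2 - max u v)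
      = (θ/2)^2 * (1 + min u v / (θ/2)) * (1 - max u v / (θ/2)) := by
    have hne : (θ : ℝ) ≠ 0 := by intro h; rw [h] at hs; norm_num at hs
    field_simp
  rw [← hfac]
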